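/- arXiv:1406.4005 — 2 statements merged into one kernel-verified Lean document; each statement's English description precedes it below -/
import Mathlib

section
/- Let G be a finite simple graph with vertex set V and h : V → ℝ an injective height function. Let u and v be adjacent vertices with upperlink_h(v) = {u}; suppose u is a maximum with respect to h, the subgraph induced on the neighbourhood of u is a cycle on at least 3 vertices, and no vertex separates u and v. Then for the swapped height function h': v is a maximum with respect to h'; the upper link of u with respect to h' is exactly {v}; and the lower link of u with respect to h' equals N(u) \ {v} and is nonempty and connected. Hence u is regular with respect to h' and the maximum shifts from u to v. -/
/-- The lower link of a vertex `w`: the set of neighbours of `w` strictly below `w`. -/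
def lowerLink {V : Type*} (G : SimpleGraph V) (h : V → ℝ) (w : V) : Set V :=
  {x | G.Adj w x ∧ h x < h w}

/-- The upper link of a vertex `w`: the set of neighbours of `w` strictly above `w`. -/
def upperLink {V : Type*} (G : SimpleGraph V) (h : V → ℝ) (w : V) : Set V :=
  {x | G.Adj w x ∧ h w < h x}

/-- The height function obtained from `h` by swapping the heights of `u` and `v`. -/
def swapH {V : Type*} [DecidableEq V] (h : V → ℝ) (u v : V) : V → ℝ :=
  fun w => if w = v then h u else if w = u then h v else h w

/-!
Below `v` only `u` is higher, and by the separation hypothesis every other neighbour of `u` lies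
below `v`. Swapping the heights of `u` and `v` therefore puts `v` above all its neighbours, while
`u` ends up below `v` and above the rest of its link. So the lower link of `u` becomes its link with
`v` removed, which is a cycle with one vertex deleted, i.e. a path, hence connected.
-/

open SimpleGraph

theorem Fin.castSucc_sub_castSucc_eq_one {n : ℕ} {i j : Fin (n + 1)} (h : i.val + 1 = j.val) :
    j.castSucc - i.castSucc = 1 := by
  rw [sub_eq_iff_eq_add']
  ext
  simp [h]

theorem SimpleGraph.cycleGraph_induce_compl_singleton_connected {n : ℕ} (k : Fin (n + 2)) :
    ((cycleGraph (n + 2)).induce {k}ᶜ).Connected := by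
  have mem_iff : ∀ d : Fin (n + 2), k + 1 + d ∈ ({k}ᶜ : Set _) ↔ d ≠ Fin.last (n + 1) := by
    intro d
    rw [Set.mem_compl_singleton_iff, add_assoc, Ne, Ne, add_eq_left, add_eq_zero_iff_neg_eq',
      ← Fin.neg_last, neg_inj]
  -- the path `k + 1, k + 2, …, k - 1` around the cycle
  let f : pathGraph (n + 1) →g (cycleGraph (n + 2)).induce {k}ᶜ :=
    { toFun i := ⟨k + 1 + i.castSucc, (mem_iff _).2 (Fin.castSucc_ne_last i)⟩
      map_rel' := by
        intro i j hij
        rw [pathGraph_adj] at hij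
        simp only [comap_adj, Function.Embedding.coe_subtype, cycleGraph_adj,
          add_sub_add_left_eq_sub]
        exact hij.symm.imp Fin.castSucc_sub_castSucc_eq_one Fin.castSucc_sub_castSucc_eq_one }
  refine (pathGraph_connected n).map f ?_
  rintro ⟨a, ha⟩
  have hd : a - (k + 1) ≠ Fin.last (n + 1) := (mem_iff _).1 (by simpa using ha)
  exact ⟨(a - (k + 1)).castPred hd, Subtype.ext (by simp [f])⟩

theorem SimpleGraph.Iso.connected_induce_diff_singleton {V W : Type*} {G : SimpleGraph V}
    {H : SimpleGraph W} {s : Set V} (φ : G.induce s ≃g H) {v : V} (hv : v ∈ s)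
    (hH : (H.induce {φ ⟨v, hv⟩}ᶜ).Connected) : (G.induce (s \ {v})).Connected := by
  let ψ : H →g G := (Embedding.induce s).toHom.comp φ.symm.toHom
  have hψ : Set.MapsTo ψ {φ ⟨v, hv⟩}ᶜ (s \ {v}) := by
    intro y hy
    refine ⟨(φ.symm y).2, fun hyv => hy ?_⟩
    have hyv' : φ.symm y = ⟨v, hv⟩ := Subtype.ext hyv
    rw [Set.mem_singleton_iff, ← hyv', φ.apply_symm_apply]
  refine hH.map (induceHom ψ hψ) ?_
  rintro ⟨x, hxs, hxv⟩
  refine ⟨⟨φ ⟨x, hxs⟩, fun hx => hxv ?_⟩, ?_⟩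
  · simpa using φ.injective hx
  · ext; simp [ψ]

section Links

variable {V : Type*} {G : SimpleGraph V} {h : V → ℝ} {u v : V}

theorem upperLink_eq_empty_iff : upperLink G h u = ∅ ↔ ∀ x, G.Adj u x → h x ≤ h u := by
  simp [Set.eq_empty_iff_forall_notMem, upperLink]

theorem lt_of_upperLink_eq_empty (hinj : Function.Injective h) (hmax : upperLink G h u = ∅)
    {x : V} (hx : G.Adj u x) : h x < h u :=
  (upperLink_eq_empty_iff.1 hmax x hx).lt_of_ne (hinj.ne hx.ne.symm)

theorem lt_of_adj_of_not_separated (hinj : Function.Injective h) (hmax : upperLink G h u = ∅)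
    (hsep : ∀ w, w ≠ u → w ≠ v → ¬(h v < h w ∧ h w < h u)) {x : V} (hx : G.Adj u x)
    (hxv : x ≠ v) : h x < h v := by
  refine (not_lt.1 fun hvx => hsep x hx.ne.symm hxv ⟨hvx, ?_⟩).lt_of_ne (hinj.ne hxv)
  exact lt_of_upperLink_eq_empty hinj hmax hx

theorem lt_of_upperLink_eq_singleton (hu : upperLink G h u = {v}) : h u < h v :=
  (hu.symm ▸ Set.mem_singleton v : v ∈ upperLink G h u).2

theorem le_of_upperLink_eq_singleton (hu : upperLink G h u = {v}) {x : V} (hx : G.Adj u x)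
    (hxv : x ≠ v) : h x ≤ h u := by
  by_contra! hlt
  have hx' : x ∈ upperLink G h u := ⟨hx, hlt⟩
  rw [hu] at hx'
  exact hxv hx'

theorem upperLink_eq_singleton_of_forall_lt (huv : G.Adj u v) (hlt : h u < h v)
    (hbelow : ∀ x, G.Adj u x → x ≠ v → h x < h u) : upperLink G h u = {v} := by
  ext x
  refine ⟨fun ⟨hx, hux⟩ => by_contra fun hxv => (hbelow x hx hxv).not_gt hux, ?_⟩
  rintro rfl
  exact ⟨huv, hlt⟩

theorem lowerLink_eq_neighborSet_diff_of_forall_lt (hlt : h u < h v)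
    (hbelow : ∀ x, G.Adj u x → x ≠ v → h x < h u) :
    lowerLink G h u = G.neighborSet u \ {v} := by
  ext x
  refine ⟨fun ⟨hx, hxu⟩ => ⟨hx, ?_⟩, fun ⟨hx, hxv⟩ => ⟨hx, hbelow x hx hxv⟩⟩
  rintro rfl
  exact hxu.not_gt hlt

end Links

theorem swapH_eq_comp_swap {V : Type*} [DecidableEq V] (h : V → ℝ) (u v : V) :
    swapH h u v = h ∘ Equiv.swap v u := by
  ext w
  simp only [swapH, Function.comp_apply, Equiv.swap_apply_def]
  split_ifs <;> rfl

theorem shift_event_maximum_general {V : Type*} [DecidableEq V]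
    (G : SimpleGraph V) (h : V → ℝ) (hinj : Function.Injective h) (u v : V)
    (huv : G.Adj u v)
    (hupv : upperLink G h v = {u})
    (hmax : upperLink G h u = ∅)
    (hcyc : ∃ n, 3 ≤ n ∧
      Nonempty ((G.induce (G.neighborSet u)) ≃g SimpleGraph.cycleGraph n))
    (hsep : ∀ w, w ≠ u → w ≠ v → ¬(h v < h w ∧ h w < h u)) :
    upperLink G (swapH h u v) v = ∅ ∧
    upperLink G (swapH h u v) u = {v} ∧
    lowerLink G (swapH h u v) u = G.neighborSet u \ {v} ∧
    (lowerLink G (swapH h u v) u).Nonempty ∧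
    (G.induce (lowerLink G (swapH h u v) u)).Connected := by
  have hvu : h v < h u := lt_of_upperLink_eq_singleton hupv
  have hsv : swapH h u v v = h u := by simp [swapH_eq_comp_swap]
  have hsu : swapH h u v u = h v := by simp [swapH_eq_comp_swap]
  have hs : ∀ x, x ≠ u → x ≠ v → swapH h u v x = h x := fun x hxu hxv => by
    simp [swapH_eq_comp_swap, Equiv.swap_apply_of_ne_of_ne hxv hxu]
  have hlt : swapH h u v u < swapH h u v v := hsu ▸ hsv ▸ hvu
  have hbelow' : ∀ x, G.Adj u x → x ≠ v → swapH h u v x < swapH h u v u := fun x hx hxv =>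
    hsu ▸ hs x hx.ne.symm hxv ▸ lt_of_adj_of_not_separated hinj hmax hsep hx hxv
  have hvmax : upperLink G (swapH h u v) v = ∅ := by
    refine upperLink_eq_empty_iff.2 fun x hx => ?_
    rcases eq_or_ne x u with rfl | hxu
    · exact hlt.le
    · rw [hsv, hs x hxu hx.ne.symm]
      exact (le_of_upperLink_eq_singleton hupv hx hxu).trans hvu.le
  have hlow := lowerLink_eq_neighborSet_diff_of_forall_lt hlt hbelow'
  obtain ⟨n, hn, ⟨φ⟩⟩ := hcyc
  obtain ⟨m, rfl⟩ : ∃ m, n = m + 2 := ⟨n - 2, by omega⟩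
  have hconn : (G.induce (lowerLink G (swapH h u v) u)).Connected := hlow ▸
    φ.connected_induce_diff_singleton huv (cycleGraph_induce_compl_singleton_connected _)
  exact ⟨hvmax, upperLink_eq_singleton_of_forall_lt huv hlt hbelow', hlow,
    Set.nonempty_coe_sort.1 hconn.nonempty, hconn⟩

/-- Shift event moving a maximum from `u` to `v`: if `u` is the unique neighbour of `v`
above `v`, `u` is a maximum whose link is a cycle on at least 3 vertices, and no vertex
separates `u` and `v`, then after swapping heights `v` is a maximum, the upper link of
`u` is exactly `{v}`, and the lower link of `u` is `N(u) \ {v}`, nonempty and connected;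
hence `u` is regular. -/
theorem shift_event_maximum {V : Type*} [Fintype V] [DecidableEq V]
    (G : SimpleGraph V) (h : V → ℝ) (hinj : Function.Injective h) (u v : V)
    (huv : G.Adj u v)
    (hupv : upperLink G h v = {u})
    (hmax : upperLink G h u = ∅)
    (hcyc : ∃ n, 3 ≤ n ∧
      Nonempty ((G.induce (G.neighborSet u)) ≃g SimpleGraph.cycleGraph n))
    (hsep : ∀ w, w ≠ u → w ≠ v → ¬(h v < h w ∧ h w < h u)) :
    upperLink G (swapH h u v) v = ∅ ∧
    upperLink G (swapH h u v) u = {v} ∧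
    lowerLink G (swapH h u v) u = G.neighborSet u \ {v} ∧
    (lowerLink G (swapH h u v) u).Nonempty ∧
    (G.induce (lowerLink G (swapH h u v) u)).Connected :=
  shift_event_maximum_general G h hinj u v huv hupv hmax hcyc hsep
end

section
/- Let G be a finite simple graph with vertex set V and h : V → ℝ an injective height function. Let u and v be adjacent vertices with h(v) < h(u); suppose no vertex separates u and v, every common neighbour x of u and v satisfies h(x) > h(v), the subgraph induced on the upper link of v is a path graph in which u is an interior (degree-2) vertex, u is a simple saddle with respect to h (its lower link and upper link each have exactly two connected components), and the subgraph induced on the neighbourhood of u is a cycle. Then {v} is a connected component of lowerlink_h(u), and for the swapped height function h': the lower link of u with respect to h' equals lowerlink_h(u) \ {v} and is nonempty and connected; the upper link of u with respect to h' equals upperlink_h(u) ∪ {v} and is connected; hence u is regular with respect to h'. Moreover the upper link of v with respect to h' equals upperlink_h(v) \ {u} and is disconnected and nonempty, and the lower link of v with respect to h' contains u; hence v is a saddle with respect to h'; i.e., the saddle shifts from u to v. -/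
open SimpleGraph

lemma eq_or_eq_of_natCard_eq_two {α : Type*} (h : Nat.card α = 2) {a b : α} (hab : a ≠ b)
    (c : α) : c = a ∨ c = b := by
  obtain ⟨y, -, hy⟩ := (Nat.card_eq_two_iff' a).1 h
  by_cases hca : c = a
  · exact Or.inl hca
  · exact Or.inr ((hy c hca).trans (hy b hab.symm).symm)

namespace SimpleGraph

variable {V : Type*} {G : SimpleGraph V}

lemma Walk.exists_mem_support_eq_of_le_of_le {S : Set V} {f : V → ℕ}
    (hf : ∀ a ∈ S, ∀ b, G.Adj a b → f b ≤ f a + 1) {x y : V} (p : G.Walk x y)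
    (hp : ∀ z ∈ p.support, z ∈ S) {k : ℕ} (hx : f x ≤ k) (hy : k ≤ f y) :
    ∃ z ∈ p.support, f z = k := by
  induction p with
  | nil => exact ⟨_, Walk.start_mem_support _, by omega⟩
  | @cons a b c hab q ih =>
    rcases hx.eq_or_lt with hxk | hxk
    · exact ⟨a, Walk.start_mem_support _, hxk⟩
    · have hb := hf a (hp a (Walk.start_mem_support _)) b hab
      obtain ⟨z, hz, hzk⟩ := ih (fun z hz => hp z (by simp [hz])) (by omega) hy
      exact ⟨z, by simp [hz], hzk⟩

lemma pathGraph_mem_support_of_lt_of_lt {m : ℕ} {x y i : Fin m} (p : (pathGraph m).Walk x y)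
    (hx : x < i) (hy : i < y) : i ∈ p.support := by
  obtain ⟨z, hz, hzi⟩ := p.exists_mem_support_eq_of_le_of_le (S := Set.univ) (f := Fin.val)
    (fun a _ b hab => by rw [pathGraph_adj] at hab; omega) (fun _ _ => trivial) hx.le hy.le
  rwa [← Fin.ext hzi]

lemma cycleGraph_adj_val_sub_le {n : ℕ} {v₀ i j : Fin (n + 2)} (hi : i ≠ v₀)
    (hij : (cycleGraph (n + 2)).Adj i j) : (j - v₀).val ≤ (i - v₀).val + 1 := by
  have hi' : i - v₀ ≠ 0 := sub_ne_zero.2 hi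
  rw [cycleGraph_adj] at hij
  rcases hij with hij | hij
  · rw [show j - v₀ = (i - v₀) - 1 by rw [← hij]; abel, Fin.coe_sub_one, if_neg hi']
    omega
  · rw [show j - v₀ = (i - v₀) + 1 by rw [← hij]; abel, Fin.val_add_one]
    split_ifs <;> simp

lemma cycleGraph_mem_support_of_notMem_support {n : ℕ} {v₀ z : Fin (n + 2)}
    (p : (cycleGraph (n + 2)).Walk (v₀ + 1) (v₀ - 1)) (hv : v₀ ∉ p.support) (hz : z ≠ v₀) :
    z ∈ p.support := by
  have hz' : 1 ≤ (z - v₀).val :=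
    Nat.one_le_iff_ne_zero.2 (Fin.val_ne_zero_iff.2 (sub_ne_zero.2 hz))
  obtain ⟨w, hw, hwz⟩ := p.exists_mem_support_eq_of_le_of_le (S := {w | w ≠ v₀})
    (f := fun w => (w - v₀).val) (fun a ha b hab => cycleGraph_adj_val_sub_le ha hab)
    (fun w hw hwv => hv (hwv ▸ hw)) (k := (z - v₀).val)
    (by simpa using hz') (by simp [Fin.coe_neg_one, (z - v₀).is_le])
  rwa [← sub_left_inj.1 (Fin.ext hwz)]

lemma ConnectedComponent.supp_connectedComponentMk_eq_singleton {v : V}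
    (hv : ∀ w, ¬ G.Adj v w) : (G.connectedComponentMk v).supp = {v} := by
  ext w
  simp only [ConnectedComponent.mem_supp_iff, ConnectedComponent.eq, Set.mem_singleton_iff]
  refine ⟨fun ⟨p⟩ => ?_, fun hw => hw ▸ Reachable.refl _⟩
  cases p.reverse with
  | nil => rfl
  | cons hvw _ => exact absurd hvw (hv _)

lemma Walk.reachable_induce_of_support_subset {s t : Set V} {x y : s}
    (p : (G.induce s).Walk x y) (hp : ∀ z ∈ p.support, (z : V) ∈ t) :
    (G.induce t).Reachable ⟨x, hp x p.start_mem_support⟩ ⟨y, hp y p.end_mem_support⟩ :=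
  ((p.map (Embedding.induce s).toHom).induce t fun z hz => by
    rw [Walk.support_map, List.mem_map] at hz
    obtain ⟨w, hw, rfl⟩ := hz
    exact hp w hw).reachable

lemma connected_induce_diff_singleton_of_natCard_eq_two {s : Set V} {v : V} (hv : v ∈ s)
    (hvs : ∀ w ∈ s, ¬ G.Adj v w) (h2 : Nat.card (G.induce s).ConnectedComponent = 2) :
    (G.induce (s \ {v})).Connected := by
  classical
  set H := G.induce s
  have hsupp := ConnectedComponent.supp_connectedComponentMk_eq_singleton
    (G := H) (v := ⟨v, hv⟩) fun w => hvs w w.2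
  have hne : ∀ x : s, (x : V) ≠ v → H.connectedComponentMk x ≠ H.connectedComponentMk ⟨v, hv⟩ :=
    fun x hx heq => by
      have hx' : x ∈ (H.connectedComponentMk ⟨v, hv⟩).supp := heq
      rw [hsupp] at hx'
      exact hx (congrArg Subtype.val hx')
  obtain ⟨C, hC, -⟩ := (Nat.card_eq_two_iff' (H.connectedComponentMk ⟨v, hv⟩)).1 h2
  obtain ⟨w, rfl⟩ := C.exists_rep
  have hwv : (w : V) ≠ v := fun hwv => hC (congrArg _ (Subtype.ext hwv))
  rw [connected_iff_exists_forall_reachable]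
  refine ⟨⟨w, w.2, hwv⟩, ?_⟩
  rintro ⟨x, hxs, hxv⟩
  obtain ⟨p⟩ := ConnectedComponent.exact <|
    ((eq_or_eq_of_natCard_eq_two h2 hC (H.connectedComponentMk ⟨x, hxs⟩)).resolve_right
      (hne ⟨x, hxs⟩ hxv)).symm
  refine p.reachable_induce_of_support_subset (t := s \ {v}) fun z hz =>
    ⟨z.2, fun hzv => hne w hwv ?_⟩
  rw [show (⟨v, hv⟩ : s) = z from Subtype.ext hzv.symm]
  exact ConnectedComponent.sound (p.takeUntil z hz).reachable

lemma connected_induce_union_singleton_of_natCard_eq_two {U : Set V} {v : V}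
    (h2 : Nat.card (G.induce U).ConnectedComponent = 2) {a b : U}
    (hab : ¬ (G.induce U).Reachable a b) (hva : G.Adj v a) (hvb : G.Adj v b) :
    (G.induce (U ∪ {v})).Connected := by
  rw [connected_iff_exists_forall_reachable]
  refine ⟨⟨v, Or.inr rfl⟩, ?_⟩
  rintro ⟨x, hx | rfl⟩
  · have hvia : ∀ c : U, G.Adj v c → (G.induce U).Reachable c ⟨x, hx⟩ →
        (G.induce (U ∪ {v})).Reachable ⟨v, Or.inr rfl⟩ ⟨x, Or.inl hx⟩ := fun c hvc hcx =>
      (show (G.induce (U ∪ {v})).Adj ⟨v, Or.inr rfl⟩ ⟨c, Or.inl c.2⟩ from hvc).reachable.trans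
        (hcx.map (G.induceHomOfLE Set.subset_union_left).toHom)
    rcases eq_or_eq_of_natCard_eq_two h2 (fun h => hab (ConnectedComponent.exact h))
      ((G.induce U).connectedComponentMk ⟨x, hx⟩) with h | h
    · exact hvia a hva (ConnectedComponent.exact h.symm)
    · exact hvia b hvb (ConnectedComponent.exact h.symm)
  · rfl

lemma Iso.not_reachable_induce_of_forall_walk {W : Type*} {H : SimpleGraph W} {S T : Set V}
    (e : G.induce S ≃g H) (hT : T ⊆ S) {a b : T}
    (hwalk : ∀ p : H.Walk (e (Set.inclusion hT a)) (e (Set.inclusion hT b)),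
      ∃ z ∈ p.support, (e.symm z : V) ∉ T) :
    ¬ (G.induce T).Reachable a b := by
  rintro ⟨p⟩
  let q : H.Walk (e (Set.inclusion hT a)) (e (Set.inclusion hT b)) :=
    p.map (e.toHom.comp (G.induceHomOfLE hT).toHom)
  obtain ⟨z, hz, hzT⟩ := hwalk q
  rw [show q.support = p.support.map _ from Walk.support_map _ _, List.mem_map] at hz
  obtain ⟨c, -, rfl⟩ := hz
  have hc : e.symm (e.toHom.comp (G.induceHomOfLE hT).toHom c) = Set.inclusion hT c :=
    e.symm_apply_apply _
  exact hzT (hc ▸ c.2)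

lemma connected_induce_union_singleton_of_iso_cycleGraph {N U : Set V} {n : ℕ}
    (e : G.induce N ≃g cycleGraph n) (hUN : U ⊆ N)
    (h2 : Nat.card (G.induce U).ConnectedComponent = 2) {v ℓ : V} (hv : v ∈ N) (hvU : v ∉ U)
    (hℓ : ℓ ∈ N) (hℓU : ℓ ∉ U) (hℓv : ℓ ≠ v) (hnbr : ∀ x : N, G.Adj v x → (x : V) ∈ U) :
    (G.induce (U ∪ {v})).Connected := by
  have hvℓ : e ⟨v, hv⟩ ≠ e ⟨ℓ, hℓ⟩ := fun h => hℓv (congrArg Subtype.val (e.injective h)).symm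
  obtain ⟨k, rfl⟩ : ∃ k, n = k + 2 := by
    have := (e ⟨v, hv⟩).isLt
    have := (e ⟨ℓ, hℓ⟩).isLt
    have := Fin.val_ne_of_ne hvℓ
    exact ⟨n - 2, by omega⟩
  set v₀ := e ⟨v, hv⟩
  have hcycle_nbr : ∀ x₀, (cycleGraph (k + 2)).Adj v₀ x₀ →
      (e.symm x₀ : V) ∈ U ∧ G.Adj v (e.symm x₀) := fun x₀ hx₀ => by
    have hvx : G.Adj v (e.symm x₀) := by simpa [v₀] using e.symm.map_adj_iff.2 hx₀
    exact ⟨hnbr _ hvx, hvx⟩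
  obtain ⟨hA, hvA⟩ := hcycle_nbr (v₀ + 1) (by simp [cycleGraph_adj])
  obtain ⟨hB, hvB⟩ := hcycle_nbr (v₀ - 1) (by simp [cycleGraph_adj])
  refine connected_induce_union_singleton_of_natCard_eq_two h2 (a := ⟨_, hA⟩) (b := ⟨_, hB⟩)
    (e.not_reachable_induce_of_forall_walk hUN fun p => ?_) hvA hvB
  let q : (cycleGraph (k + 2)).Walk (v₀ + 1) (v₀ - 1) := p.copy (by simp) (by simp)
  by_cases hv₀ : v₀ ∈ q.support
  · exact ⟨v₀, by simpa [q] using hv₀, by simpa [v₀] using hvU⟩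
  · exact ⟨e ⟨ℓ, hℓ⟩, by simpa [q] using cycleGraph_mem_support_of_notMem_support q hv₀ hvℓ.symm,
      by simpa using hℓU⟩

lemma not_connected_induce_diff_singleton_of_iso_pathGraph {S : Set V} {m : ℕ}
    (e : G.induce S ≃g pathGraph m) {u a b : V} (hu : u ∈ S) (ha : a ∈ S) (hb : b ∈ S)
    (hab : a ≠ b) (hua : G.Adj u a) (hub : G.Adj u b) :
    ¬ (G.induce (S \ {u})).Connected := by
  set i := e ⟨u, hu⟩
  have hsplit : ∀ {c d : V} (hc : c ∈ S \ {u}) (hd : d ∈ S \ {u}), e ⟨c, hc.1⟩ < i →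
      i < e ⟨d, hd.1⟩ → ¬ (G.induce (S \ {u})).Reachable ⟨c, hc⟩ ⟨d, hd⟩ :=
    fun hc hd hci hid => e.not_reachable_induce_of_forall_walk Set.sdiff_subset fun p =>
      ⟨i, pathGraph_mem_support_of_lt_of_lt p hci hid, by simp [i]⟩
  have hia : (pathGraph m).Adj i (e ⟨a, ha⟩) := e.map_adj_iff.2 hua
  have hib : (pathGraph m).Adj i (e ⟨b, hb⟩) := e.map_adj_iff.2 hub
  have hab' : (e ⟨a, ha⟩).val ≠ (e ⟨b, hb⟩).val :=
    Fin.val_ne_of_ne fun h => hab (congrArg Subtype.val (e.injective h))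
  rw [pathGraph_adj] at hia hib
  intro hconn
  have ha' : a ∈ S \ {u} := ⟨ha, hua.ne'⟩
  have hb' : b ∈ S \ {u} := ⟨hb, hub.ne'⟩
  rcases (by omega : (e ⟨a, ha⟩).val < i.val ∧ i.val < (e ⟨b, hb⟩).val ∨
      (e ⟨b, hb⟩).val < i.val ∧ i.val < (e ⟨a, ha⟩).val) with ⟨h1, h2⟩ | ⟨h1, h2⟩
  · exact hsplit ha' hb' h1 h2 (hconn.preconnected _ _)
  · exact hsplit hb' ha' h1 h2 (hconn.preconnected _ _)

end SimpleGraph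

section HeightOrder

variable {V : Type*} {h : V → ℝ} {u v w : V}

lemma lt_left_iff_lt_right (hsep : ∀ w, w ≠ u → w ≠ v → ¬(h v < h w ∧ h w < h u))
    (hinj : Function.Injective h) (hlt : h v < h u) (hwu : w ≠ u) (hwv : w ≠ v) :
    h w < h u ↔ h w < h v := by
  refine ⟨fun hwu' => ?_, fun hwv' => hwv'.trans hlt⟩
  refine lt_of_le_of_ne (not_lt.1 fun hvw => hsep w hwu hwv ⟨hvw, hwu'⟩) ?_
  exact fun hwv' => hwv (hinj hwv')

lemma left_lt_iff_right_lt (hsep : ∀ w, w ≠ u → w ≠ v → ¬(h v < h w ∧ h w < h u))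
    (hinj : Function.Injective h) (hlt : h v < h u) (hwu : w ≠ u) (hwv : w ≠ v) :
    h u < h w ↔ h v < h w := by
  refine ⟨hlt.trans, fun hvw => ?_⟩
  refine lt_of_le_of_ne (not_lt.1 fun hwu' => hsep w hwu hwv ⟨hvw, hwu'⟩) ?_
  exact fun huw => hwu (hinj huw).symm

end HeightOrder

section SwapH

variable {V : Type*} [DecidableEq V] {G : SimpleGraph V} {h : V → ℝ} {u v w : V}

lemma swapH_apply_left (huv : u ≠ v) : swapH h u v u = h v := by simp [swapH, huv]

lemma swapH_apply_right : swapH h u v v = h u := by simp [swapH]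

lemma swapH_apply_of_ne (hwu : w ≠ u) (hwv : w ≠ v) : swapH h u v w = h w := by
  simp [swapH, hwu, hwv]

lemma lowerLink_swapH_left (hsep : ∀ w, w ≠ u → w ≠ v → ¬(h v < h w ∧ h w < h u))
    (hinj : Function.Injective h) (hlt : h v < h u) :
    lowerLink G (swapH h u v) u = lowerLink G h u \ {v} := by
  have huv : u ≠ v := fun huv => (huv ▸ hlt).false
  ext x
  simp only [lowerLink, Set.mem_sdiff, Set.mem_ofPred_eq, Set.mem_singleton_iff]
  by_cases hxv : x = v
  · subst hxv; simp [swapH_apply_left huv, swapH_apply_right, hlt.le]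
  by_cases hxu : x = u
  · subst hxu; simp
  rw [swapH_apply_left huv, swapH_apply_of_ne hxu hxv,
    lt_left_iff_lt_right hsep hinj hlt hxu hxv]
  tauto

lemma upperLink_swapH_left (hsep : ∀ w, w ≠ u → w ≠ v → ¬(h v < h w ∧ h w < h u))
    (hinj : Function.Injective h) (huv : G.Adj u v) (hlt : h v < h u) :
    upperLink G (swapH h u v) u = upperLink G h u ∪ {v} := by
  ext x
  simp only [upperLink, Set.mem_union, Set.mem_ofPred_eq, Set.mem_singleton_iff]
  by_cases hxv : x = v
  · subst hxv; simp [swapH_apply_left huv.ne, swapH_apply_right, hlt, huv]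
  by_cases hxu : x = u
  · subst hxu; simp [hxv]
  rw [swapH_apply_left huv.ne, swapH_apply_of_ne hxu hxv,
    left_lt_iff_right_lt hsep hinj hlt hxu hxv]
  tauto

lemma upperLink_swapH_right (hsep : ∀ w, w ≠ u → w ≠ v → ¬(h v < h w ∧ h w < h u))
    (hinj : Function.Injective h) (hlt : h v < h u) :
    upperLink G (swapH h u v) v = upperLink G h v \ {u} := by
  have huv : u ≠ v := fun huv => (huv ▸ hlt).false
  ext x
  simp only [upperLink, Set.mem_sdiff, Set.mem_ofPred_eq, Set.mem_singleton_iff]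
  by_cases hxu : x = u
  · subst hxu; simp [swapH_apply_left huv, swapH_apply_right, hlt.le]
  by_cases hxv : x = v
  · subst hxv; simp
  rw [swapH_apply_right, swapH_apply_of_ne hxu hxv, left_lt_iff_right_lt hsep hinj hlt hxu hxv]
  tauto

lemma mem_lowerLink_swapH_right (huv : G.Adj u v) (hlt : h v < h u) :
    u ∈ lowerLink G (swapH h u v) v :=
  ⟨huv.symm, by rwa [swapH_apply_left huv.ne, swapH_apply_right]⟩

end SwapH

section ShiftEvent

variable {V : Type*} {G : SimpleGraph V} {h : V → ℝ} {u v : V}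

lemma not_adj_of_mem_lowerLink (hsep : ∀ w, w ≠ u → w ≠ v → ¬(h v < h w ∧ h w < h u))
    (hcommon : ∀ x, G.Adj u x → G.Adj v x → h v < h x) :
    ∀ w ∈ lowerLink G h u, ¬ G.Adj v w :=
  fun w hw hvw => hsep w hw.1.ne' hvw.ne' ⟨hcommon w hw.1 hvw, hw.2⟩

lemma mem_upperLink_of_adj_of_adj (hsep : ∀ w, w ≠ u → w ≠ v → ¬(h v < h w ∧ h w < h u))
    (hinj : Function.Injective h) (hlt : h v < h u)
    (hcommon : ∀ x, G.Adj u x → G.Adj v x → h v < h x) {x : V} (hux : G.Adj u x)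
    (hvx : G.Adj v x) : x ∈ upperLink G h u :=
  ⟨hux, (left_lt_iff_right_lt hsep hinj hlt hux.ne' hvx.ne').2 (hcommon x hux hvx)⟩

end ShiftEvent

theorem shift_event_saddle_general {V : Type*} [DecidableEq V]
    (G : SimpleGraph V) (h : V → ℝ) (hinj : Function.Injective h) (u v : V)
    (huv : G.Adj u v) (hlt : h v < h u)
    (hsep : ∀ w, w ≠ u → w ≠ v → ¬(h v < h w ∧ h w < h u))
    (hcommon : ∀ x, G.Adj u x → G.Adj v x → h v < h x)
    (hpath : ∃ n, Nonempty ((G.induce (upperLink G h v)) ≃g SimpleGraph.pathGraph n))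
    (hdeg : {x ∈ upperLink G h v | G.Adj u x}.ncard = 2)
    (hsadL : Nat.card (G.induce (lowerLink G h u)).ConnectedComponent = 2)
    (hsadU : Nat.card (G.induce (upperLink G h u)).ConnectedComponent = 2)
    (hcycu : ∃ n, Nonempty ((G.induce (G.neighborSet u)) ≃g SimpleGraph.cycleGraph n)) :
    ((G.induce (lowerLink G h u)).connectedComponentMk ⟨v, huv, hlt⟩).supp
      = {⟨v, huv, hlt⟩} ∧
    lowerLink G (swapH h u v) u = lowerLink G h u \ {v} ∧
    (lowerLink G (swapH h u v) u).Nonempty ∧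
    (G.induce (lowerLink G (swapH h u v) u)).Connected ∧
    upperLink G (swapH h u v) u = upperLink G h u ∪ {v} ∧
    (G.induce (upperLink G (swapH h u v) u)).Connected ∧
    upperLink G (swapH h u v) v = upperLink G h v \ {u} ∧
    (upperLink G (swapH h u v) v).Nonempty ∧
    ¬ (G.induce (upperLink G (swapH h u v) v)).Connected ∧
    u ∈ lowerLink G (swapH h u v) v := by
  have hiso := not_adj_of_mem_lowerLink hsep hcommon
  have hlower := connected_induce_diff_singleton_of_natCard_eq_two (s := lowerLink G h u)
    ⟨huv, hlt⟩ hiso hsadL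
  obtain ⟨⟨ℓ, hℓ, hℓv⟩⟩ := hlower.nonempty
  obtain ⟨_, ⟨eu⟩⟩ := hcycu
  have hupper := connected_induce_union_singleton_of_iso_cycleGraph eu (fun _ hx => hx.1) hsadU
    huv (fun hv => hv.2.asymm hlt) hℓ.1 (fun hℓU => hℓU.2.asymm hℓ.2) hℓv
    fun x hvx => mem_upperLink_of_adj_of_adj hsep hinj hlt hcommon x.2 hvx
  obtain ⟨_, ⟨ev⟩⟩ := hpath
  obtain ⟨a, b, hab, hnbrs⟩ := Set.ncard_eq_two.mp hdeg
  have ha : a ∈ {x ∈ upperLink G h v | G.Adj u x} := hnbrs ▸ Or.inl rfl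
  have hb : b ∈ {x ∈ upperLink G h v | G.Adj u x} := hnbrs ▸ Or.inr rfl
  rw [lowerLink_swapH_left hsep hinj hlt, upperLink_swapH_left hsep hinj huv hlt,
    upperLink_swapH_right hsep hinj hlt]
  exact ⟨ConnectedComponent.supp_connectedComponentMk_eq_singleton fun w => hiso w w.2,
    rfl, ⟨ℓ, hℓ, hℓv⟩, hlower, rfl, hupper, rfl, ⟨a, ha.1, ha.2.ne'⟩,
    not_connected_induce_diff_singleton_of_iso_pathGraph ev ⟨huv.symm, hlt⟩ ha.1 hb.1 hab ha.2 hb.2,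
    mem_lowerLink_swapH_right huv hlt⟩

/-- Shift event moving a saddle from `u` to `v`: if `u` is a simple saddle whose link
is a cycle, the upper link of `v` is a path in which `u` is an interior (degree-2)
vertex, all common neighbours of `u` and `v` lie above `v`, and no vertex separates
`u` and `v`, then `{v}` is a connected component of the lower link of `u`, and after
swapping heights `u` becomes regular while `v` becomes a saddle. -/
theorem shift_event_saddle {V : Type*} [Fintype V] [DecidableEq V]
    (G : SimpleGraph V) (h : V → ℝ) (hinj : Function.Injective h) (u v : V)
    (huv : G.Adj u v) (hlt : h v < h u)
    (hsep : ∀ w, w ≠ u → w ≠ v → ¬(h v < h w ∧ h w < h u))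
    (hcommon : ∀ x, G.Adj u x → G.Adj v x → h v < h x)
    (hpath : ∃ n, Nonempty ((G.induce (upperLink G h v)) ≃g SimpleGraph.pathGraph n))
    (hdeg : {x ∈ upperLink G h v | G.Adj u x}.ncard = 2)
    (hsadL : Nat.card (G.induce (lowerLink G h u)).ConnectedComponent = 2)
    (hsadU : Nat.card (G.induce (upperLink G h u)).ConnectedComponent = 2)
    (hcycu : ∃ n, Nonempty ((G.induce (G.neighborSet u)) ≃g SimpleGraph.cycleGraph n)) :
    ((G.induce (lowerLink G h u)).connectedComponentMk ⟨v, huv, hlt⟩).supp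
      = {⟨v, huv, hlt⟩} ∧
    lowerLink G (swapH h u v) u = lowerLink G h u \ {v} ∧
    (lowerLink G (swapH h u v) u).Nonempty ∧
    (G.induce (lowerLink G (swapH h u v) u)).Connected ∧
    upperLink G (swapH h u v) u = upperLink G h u ∪ {v} ∧
    (G.induce (upperLink G (swapH h u v) u)).Connected ∧
    upperLink G (swapH h u v) v = upperLink G h v \ {u} ∧
    (upperLink G (swapH h u v) v).Nonempty ∧
    ¬ (G.induce (upperLink G (swapH h u v) v)).Connected ∧
    u ∈ lowerLink G (swapH h u v) v :=
  shift_event_saddle_general G h hinj u v huv hlt hsep hcommon hpath hdeg hsadL hsadU hcycu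
end
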